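/- arXiv:1505.04673 — 3 statements merged into one kernel-verified Lean document; each statement's English description precedes it below -/
import Mathlib

section
/- Let δ_{ij}^{(ℓ)} ≥ 0, i,j ∈ {0,1,2}, ℓ ∈ {1,…,L}, satisfy the flow-balance conditions ∑_{i} δ_{ik}^{(ℓ−1)}σ_{ik}² = ∑_{j} δ_{kj}^{(ℓ)}σ_{kj}² for all k ∈ {0,1,2} and ℓ ∈ {2,…,L} (identical layer parameters σ_{ij}² ≥ 0), and let γ = ∑_k |∑_j δ_{kj}^{(1)}σ_{kj}² − ∑_i δ_{ik}^{(L)}σ_{ik}²|. Then the layer averages δ̃_{ij} = (1/L)∑_ℓ δ_{ij}^{(ℓ)} satisfy ∑_k |∑_j δ̃_{kj}σ_{kj}² − ∑_i δ̃_{ik}σ_{ik}²| = γ/L. -/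
/-- Telescoping step: flow-balanced `L`-layer allocations, averaged over layers, yield a
single-layer allocation whose flow imbalance is the end-imbalance `γ` divided by `L`. -/
theorem stmt13 (L : ℕ) (hL : 1 ≤ L) (s : Fin 3 → Fin 3 → ℝ) (hs : ∀ i j, 0 ≤ s i j)
    (δ : ℕ → Fin 3 → Fin 3 → ℝ) (hδ : ∀ ℓ i j, 0 ≤ δ ℓ i j)
    (hbal : ∀ ℓ, 1 ≤ ℓ → ℓ < L → ∀ k,
        ∑ i, δ (ℓ - 1) i k * s i k = ∑ j, δ ℓ k j * s k j)
    (γ : ℝ)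
    (hγ : γ = ∑ k, |(∑ j, δ 0 k j * s k j) - (∑ i, δ (L - 1) i k * s i k)|) :
    ∑ k, |(∑ j, ((1 / (L : ℝ)) * ∑ ℓ ∈ Finset.range L, δ ℓ k j) * s k j)
        - (∑ i, ((1 / (L : ℝ)) * ∑ ℓ ∈ Finset.range L, δ ℓ i k) * s i k)|
      = γ / L := by
  obtain ⟨n, rfl⟩ : ∃ n, L = n + 1 := ⟨L - 1, (Nat.succ_pred_eq_of_pos hL).symm⟩
  set Lr : ℝ := ((n + 1 : ℕ) : ℝ) with hLr
  have hLpos : (0 : ℝ) < Lr := by positivity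
  have key : ∀ k : Fin 3,
      (∑ ℓ ∈ Finset.range (n + 1), ∑ j, δ ℓ k j * s k j)
        - (∑ ℓ ∈ Finset.range (n + 1), ∑ i, δ ℓ i k * s i k)
      = (∑ j, δ 0 k j * s k j) - (∑ i, δ n i k * s i k) := by
    intro k
    have h1 : (∑ ℓ ∈ Finset.range (n + 1), ∑ j, δ ℓ k j * s k j)
        = (∑ ℓ ∈ Finset.range n, ∑ j, δ (ℓ + 1) k j * s k j) + ∑ j, δ 0 k j * s k j :=
      Finset.sum_range_succ' _ n
    have h2 : (∑ ℓ ∈ Finset.range (n + 1), ∑ i, δ ℓ i k * s i k)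
        = (∑ ℓ ∈ Finset.range n, ∑ i, δ ℓ i k * s i k) + ∑ i, δ n i k * s i k :=
      Finset.sum_range_succ _ n
    have h3 : (∑ ℓ ∈ Finset.range n, ∑ j, δ (ℓ + 1) k j * s k j)
        = ∑ ℓ ∈ Finset.range n, ∑ i, δ ℓ i k * s i k := by
      apply Finset.sum_congr rfl
      intro ℓ hℓ
      have hℓn : ℓ < n := Finset.mem_range.mp hℓ
      have := hbal (ℓ + 1) (Nat.le_add_left 1 ℓ) (by omega) k
      simpa using this.symm
    rw [h1, h2, h3]; ring
  rw [hγ, Finset.sum_div]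
  apply Finset.sum_congr rfl
  intro k _
  have : (∑ j, ((1 / Lr) * ∑ ℓ ∈ Finset.range (n + 1), δ ℓ k j) * s k j)
        - (∑ i, ((1 / Lr) * ∑ ℓ ∈ Finset.range (n + 1), δ ℓ i k) * s i k)
      = (1 / Lr) * ((∑ ℓ ∈ Finset.range (n + 1), ∑ j, δ ℓ k j * s k j)
        - (∑ ℓ ∈ Finset.range (n + 1), ∑ i, δ ℓ i k * s i k)) := by
    simp only [mul_sub, Finset.mul_sum, Finset.sum_mul]
    congr 1 <;> rw [Finset.sum_comm] <;> apply Finset.sum_congr rfl <;> intro a _ <;>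
      apply Finset.sum_congr rfl <;> intro b _ <;> ring
  rw [this, key k, abs_mul, abs_of_pos (by positivity : (0:ℝ) < 1 / Lr)]
  have hne : Lr ≠ 0 := ne_of_gt hLpos
  have : (n + 1 : ℕ) - 1 = n := by omega
  rw [this]
  field_simp
end

section
/- Define C(ε) as the value of the LP: maximize ∑_{i,j∈{0,1,2}} δ_{ij}σ_{ij}² over δ_{ij} ≥ 0 with ∑δ_{ij} ≤ 1 and ∑_{k=0}^{2} |∑_j δ_{kj}σ_{kj}² − ∑_i δ_{ik}σ_{ik}²| ≤ ε. Then C is continuous from the right at ε = 0: lim_{ε→0⁺} C(ε) = C(0). Moreover, for all ε > 0, C(0) ≤ C(ε) ≤ C(0) + 4·max_{σ_{ij}≠0}(σ_{ij}^{-2})·ε·∑_{i,j}σ_{ij}². -/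
open Topology Filter

namespace Stmt15Aux


/-- net outflow at node `k` -/
def fb (x : Fin 3 → Fin 3 → ℝ) (k : Fin 3) : ℝ := (∑ j, x k j) - (∑ i, x i k)

/-- termination measure -/
noncomputable def Mx (x : Fin 3 → Fin 3 → ℝ) : ℕ :=
  (Finset.univ.filter fun k => fb x k ≠ 0).card +
  (Finset.univ.filter fun e : Fin 3 × Fin 3 => e.1 ≠ e.2 ∧ x e.1 e.2 ≠ 0).card

lemma sum_fb (x : Fin 3 → Fin 3 → ℝ) : ∑ k, fb x k = 0 := by
  simp only [fb, Finset.sum_sub_distrib]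
  rw [Finset.sum_comm]
  ring

lemma fb_sub (x d : Fin 3 → Fin 3 → ℝ) (k : Fin 3) :
    fb (fun i j => x i j - d i j) k = fb x k - ((∑ j, d k j) - (∑ i, d i k)) := by
  simp only [fb, Finset.sum_sub_distrib]
  ring

lemma pos_neg {f : Fin 3 → ℝ} (h0 : ∑ k, f k = 0) (hne : ∃ k, f k ≠ 0) :
    (∃ p, 0 < f p) ∧ (∃ l, f l < 0) := by
  obtain ⟨k, hk⟩ := hne
  constructor
  · by_contra h
    push_neg at h
    have hlt : f k < 0 := lt_of_le_of_ne (h k) hk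
    have : ∑ k, f k < ∑ _k : Fin 3, (0:ℝ) := by
      apply Finset.sum_lt_sum (fun i _ => h i) ⟨k, Finset.mem_univ k, hlt⟩
    simp [h0] at this
  · by_contra h
    push_neg at h
    have hlt : 0 < f k := lt_of_le_of_ne (h k) (Ne.symm hk)
    have : ∑ _k : Fin 3, (0:ℝ) < ∑ k, f k := by
      apply Finset.sum_lt_sum (fun i _ => h i) ⟨k, Finset.mem_univ k, hlt⟩
    simp [h0] at this

lemma abs_sum_step (g : Fin 3 → ℝ) (p l : Fin 3) (hpl : p ≠ l) (t : ℝ) (ht0 : 0 < t)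
    (htp : t ≤ g p) (htl : t ≤ -g l) :
    ∑ k, |g k - (if k = p then t else 0) + (if k = l then t else 0)|
      = (∑ k, |g k|) - 2 * t := by
  have hpt : ∀ k : Fin 3, |g k - (if k = p then t else 0) + (if k = l then t else 0)|
      = |g k| - ((if k = p then t else 0) + (if k = l then t else 0)) := by
    intro k
    by_cases hk : k = p
    · subst hk
      rw [if_pos rfl, if_neg hpl]
      rw [abs_of_nonneg (by linarith), abs_of_nonneg (by linarith)]
      ring
    · by_cases hkl : k = l
      · subst hkl
        rw [if_neg hk, if_pos rfl]
        rw [abs_of_nonpos (by linarith), abs_of_nonpos (by linarith)]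
        ring
      · simp [hk, hkl]
  rw [Finset.sum_congr rfl (fun k _ => hpt k)]
  rw [Finset.sum_sub_distrib, Finset.sum_add_distrib]
  simp [Finset.sum_ite_eq']
  ring

lemma Mx_lt (x d : Fin 3 → Fin 3 → ℝ) (hd0 : ∀ i j, 0 ≤ d i j) (hdx : ∀ i j, d i j ≤ x i j)
    (p l : Fin 3) (hfp : fb x p ≠ 0) (hfl : fb x l ≠ 0)
    (hf' : ∀ k, k ≠ p → k ≠ l → fb (fun i j => x i j - d i j) k = fb x k)
    (hstrict : (∃ k, fb x k ≠ 0 ∧ fb (fun i j => x i j - d i j) k = 0) ∨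
               (∃ a b, a ≠ b ∧ x a b ≠ 0 ∧ x a b - d a b = 0)) :
    Mx (fun i j => x i j - d i j) < Mx x := by
  set y : Fin 3 → Fin 3 → ℝ := fun i j => x i j - d i j with hy
  have sub1 : (Finset.univ.filter fun k => fb y k ≠ 0) ⊆
      (Finset.univ.filter fun k => fb x k ≠ 0) := by
    intro k hk
    simp only [Finset.mem_filter, Finset.mem_univ, true_and] at hk ⊢
    by_cases hkp : k = p
    · subst hkp; exact hfp
    · by_cases hkl : k = l
      · subst hkl; exact hfl
      · rw [← hf' k hkp hkl]; exact hk
  have sub2 : (Finset.univ.filter fun e : Fin 3 × Fin 3 => e.1 ≠ e.2 ∧ y e.1 e.2 ≠ 0) ⊆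
      (Finset.univ.filter fun e : Fin 3 × Fin 3 => e.1 ≠ e.2 ∧ x e.1 e.2 ≠ 0) := by
    intro e he
    simp only [Finset.mem_filter, Finset.mem_univ, true_and] at he ⊢
    refine ⟨he.1, ?_⟩
    intro hx0
    apply he.2
    have hd' : d e.1 e.2 = 0 := le_antisymm (hx0 ▸ hdx e.1 e.2) (hd0 e.1 e.2)
    simp [hy, hx0, hd']
  have c1 : (Finset.univ.filter fun k => fb y k ≠ 0).card ≤
      (Finset.univ.filter fun k => fb x k ≠ 0).card := Finset.card_le_card sub1
  have c2 : (Finset.univ.filter fun e : Fin 3 × Fin 3 => e.1 ≠ e.2 ∧ y e.1 e.2 ≠ 0).card ≤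
      (Finset.univ.filter fun e : Fin 3 × Fin 3 => e.1 ≠ e.2 ∧ x e.1 e.2 ≠ 0).card :=
    Finset.card_le_card sub2
  rcases hstrict with ⟨k, hk1, hk2⟩ | ⟨a, b, hab, hab1, hab2⟩
  · have : (Finset.univ.filter fun k => fb y k ≠ 0).card <
        (Finset.univ.filter fun k => fb x k ≠ 0).card := by
      apply Finset.card_lt_card
      rw [Finset.ssubset_iff_of_subset sub1]
      exact ⟨k, by simp [hk1], by simp [hk2]⟩
    unfold Mx; omega
  · have : (Finset.univ.filter fun e : Fin 3 × Fin 3 => e.1 ≠ e.2 ∧ y e.1 e.2 ≠ 0).card <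
        (Finset.univ.filter fun e : Fin 3 × Fin 3 => e.1 ≠ e.2 ∧ x e.1 e.2 ≠ 0).card := by
      apply Finset.card_lt_card
      rw [Finset.ssubset_iff_of_subset sub2]
      exact ⟨(a, b), by simp [hab, hab1], by simp [hy, hab2]⟩
    unfold Mx; omega

lemma third_ne : ∀ p l : Fin 3, p ≠ l → -(p + l) ≠ p ∧ -(p + l) ≠ l := by decide

lemma third_cover : ∀ p l j : Fin 3, p ≠ l → j ≠ p → j = -(p + l) ∨ j = l := by decide

lemma third_cover' : ∀ p l i : Fin 3, p ≠ l → i ≠ l → i = -(p + l) ∨ i = p := by decide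

lemma balance_aux : ∀ n : ℕ, ∀ x : Fin 3 → Fin 3 → ℝ, Mx x ≤ n → (∀ i j, 0 ≤ x i j) →
    ∃ y : Fin 3 → Fin 3 → ℝ, (∀ i j, 0 ≤ y i j) ∧ (∀ i j, y i j ≤ x i j) ∧
      (∀ k, fb y k = 0) ∧
      (∑ i, ∑ j, x i j) - (∑ i, ∑ j, y i j) ≤ ∑ k, |fb x k| := by
  intro n
  induction n with
  | zero =>
    intro x hM hx
    refine ⟨x, hx, fun i j => le_rfl, ?_, by rw [sub_self]; positivity⟩
    intro k
    by_contra hk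
    have hmem : k ∈ Finset.univ.filter fun k => fb x k ≠ 0 := by simp [hk]
    have := Finset.card_pos.mpr ⟨k, hmem⟩
    unfold Mx at hM; omega
  | succ n ih =>
    intro x hM hx
    by_cases hz : ∀ k, fb x k = 0
    · exact ⟨x, hx, fun i j => le_rfl, hz, by rw [sub_self]; positivity⟩
    · push_neg at hz
      obtain ⟨⟨p, hfp⟩, ⟨l, hfl⟩⟩ := pos_neg (sum_fb x) hz
      have hpl : p ≠ l := by intro h; rw [h] at hfp; linarith
      by_cases hA : 0 < x p l
      · -- Case A: direct edge p → l
        set t := min (x p l) (min (fb x p) (-fb x l)) with htdef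
        have ht0 : 0 < t := lt_min hA (lt_min hfp (by linarith))
        have htxpl : t ≤ x p l := min_le_left _ _
        have htp : t ≤ fb x p := le_trans (min_le_right _ _) (min_le_left _ _)
        have htl : t ≤ -fb x l := le_trans (min_le_right _ _) (min_le_right _ _)
        set d : Fin 3 → Fin 3 → ℝ := fun i j => if i = p ∧ j = l then t else 0 with hddef
        have hd0 : ∀ i j, 0 ≤ d i j := by
          intro i j; simp only [hddef]; split_ifs; exacts [ht0.le, le_rfl]
        have hdx : ∀ i j, d i j ≤ x i j := by
          intro i j; simp only [hddef]; split_ifs with h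
          · obtain ⟨rfl, rfl⟩ := h; exact htxpl
          · exact hx i j
        have hout : ∀ k, (∑ j, d k j) = if k = p then t else 0 := by
          intro k; by_cases hk : k = p <;> simp [hddef, hk, Finset.sum_ite_eq']
        have hinn : ∀ k, (∑ i, d i k) = if k = l then t else 0 := by
          intro k; by_cases hk : k = l <;> simp [hddef, hk, Finset.sum_ite_eq']
        have hdsum : (∑ i, ∑ j, d i j) = t := by
          rw [Finset.sum_congr rfl (fun i _ => hout i)]
          simp [Finset.sum_ite_eq']
        have hf' : ∀ k, fb (fun i j => x i j - d i j) k
            = fb x k - (if k = p then t else 0) + (if k = l then t else 0) := by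
          intro k; rw [fb_sub, hout, hinn]; ring
        have htc : t = x p l ∨ t = fb x p ∨ t = -fb x l := by
          rcases min_choice (x p l) (min (fb x p) (-fb x l)) with h | h
          · left; rw [htdef, h]
          · rcases min_choice (fb x p) (-fb x l) with h2 | h2
            · right; left; rw [htdef, h, h2]
            · right; right; rw [htdef, h, h2]
        have hstrict : (∃ k, fb x k ≠ 0 ∧ fb (fun i j => x i j - d i j) k = 0) ∨
            (∃ a b, a ≠ b ∧ x a b ≠ 0 ∧ x a b - d a b = 0) := by
          rcases htc with h | h | h
          · right; refine ⟨p, l, hpl, hA.ne', ?_⟩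
            have hd : d p l = t := by simp [hddef]
            rw [hd, h, sub_self]
          · left; refine ⟨p, hfp.ne', ?_⟩
            rw [hf' p, if_pos rfl, if_neg hpl, h]; ring
          · left; refine ⟨l, hfl.ne, ?_⟩
            rw [hf' l, if_neg (Ne.symm hpl), if_pos rfl, h]; ring
        have hMlt := Mx_lt x d hd0 hdx p l hfp.ne' hfl.ne
          (fun k hkp hkl => by rw [hf' k, if_neg hkp, if_neg hkl]; ring) hstrict
        obtain ⟨y, hy0, hyx, hybal, hydec⟩ := ih (fun i j => x i j - d i j) (by omega)
          (fun i j => sub_nonneg.mpr (hdx i j))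
        refine ⟨y, hy0, fun i j => (hyx i j).trans (by linarith [hd0 i j]), hybal, ?_⟩
        have habs : ∑ k, |fb (fun i j => x i j - d i j) k| = (∑ k, |fb x k|) - 2 * t := by
          rw [Finset.sum_congr rfl (fun k _ => by rw [hf' k])]
          exact abs_sum_step (fb x) p l hpl t ht0 htp htl
        have hsx : (∑ i, ∑ j, (x i j - d i j)) = (∑ i, ∑ j, x i j) - t := by
          simp only [Finset.sum_sub_distrib]
          rw [hdsum]
        rw [hsx, habs] at hydec
        linarith
      · -- Case B: path p → m → l
        have hxpl : x p l = 0 := le_antisymm (not_lt.mp hA) (hx p l)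
        set m := -(p + l) with hmdef
        have hm := third_ne p l hpl
        rw [← hmdef] at hm
        have hcov1 : ∀ j : Fin 3, j ≠ p → j = m ∨ j = l := by
          intro j hj; rw [hmdef]; exact third_cover p l j hpl hj
        have hcov2 : ∀ i : Fin 3, i ≠ l → i = m ∨ i = p := by
          intro i hi; rw [hmdef]; exact third_cover' p l i hpl hi
        have hxpm : 0 < x p m := by
          by_contra h
          have h0 : ∀ b : Fin 3, b ≠ p → x p b = 0 := by
            intro b hb
            rcases hcov1 b hb with rfl | rfl
            · exact le_antisymm (not_lt.mp h) (hx p m)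
            · exact hxpl
          have houtp : (∑ j, x p j) = x p p :=
            Finset.sum_eq_single p (fun b _ hb => h0 b hb)
              (fun hp => absurd (Finset.mem_univ p) hp)
          have hinnp : x p p ≤ ∑ i, x i p :=
            Finset.single_le_sum (fun i _ => hx i p) (Finset.mem_univ p)
          have : fb x p ≤ 0 := by unfold fb; rw [houtp]; linarith
          linarith
        have hxml : 0 < x m l := by
          by_contra h
          have h0 : ∀ a : Fin 3, a ≠ l → x a l = 0 := by
            intro a ha
            rcases hcov2 a ha with rfl | rfl
            · exact le_antisymm (not_lt.mp h) (hx m l)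
            · exact hxpl
          have hinnl : (∑ i, x i l) = x l l :=
            Finset.sum_eq_single l (fun b _ hb => h0 b hb)
              (fun hp => absurd (Finset.mem_univ l) hp)
          have houtl : x l l ≤ ∑ j, x l j :=
            Finset.single_le_sum (fun j _ => hx l j) (Finset.mem_univ l)
          have : 0 ≤ fb x l := by unfold fb; rw [hinnl]; linarith
          linarith
        set t := min (min (x p m) (x m l)) (min (fb x p) (-fb x l)) with htdef
        have ht0 : 0 < t := lt_min (lt_min hxpm hxml) (lt_min hfp (by linarith))
        have htxpm : t ≤ x p m := le_trans (min_le_left _ _) (min_le_left _ _)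
        have htxml : t ≤ x m l := le_trans (min_le_left _ _) (min_le_right _ _)
        have htp : t ≤ fb x p := le_trans (min_le_right _ _) (min_le_left _ _)
        have htl : t ≤ -fb x l := le_trans (min_le_right _ _) (min_le_right _ _)
        set d : Fin 3 → Fin 3 → ℝ := fun i j =>
          (if i = p ∧ j = m then t else 0) + (if i = m ∧ j = l then t else 0) with hddef
        have hd0 : ∀ i j, 0 ≤ d i j := by
          intro i j; simp only [hddef]
          apply add_nonneg
          · split_ifs; exacts [ht0.le, le_rfl]
          · split_ifs; exacts [ht0.le, le_rfl]
        have hdx : ∀ i j, d i j ≤ x i j := by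
          intro i j; simp only [hddef]; split_ifs with h1 h2 h2
          · exact absurd (h1.1.symm.trans h2.1) (Ne.symm hm.1)
          · obtain ⟨rfl, rfl⟩ := h1; simpa using htxpm
          · obtain ⟨rfl, rfl⟩ := h2; simpa using htxml
          · simpa using hx i j
        have hout : ∀ k, (∑ j, d k j)
            = (if k = p then t else 0) + (if k = m then t else 0) := by
          intro k
          simp only [hddef]
          rw [Finset.sum_add_distrib]
          congr 1
          · by_cases hk : k = p <;> simp [hk, Finset.sum_ite_eq']
          · by_cases hk : k = m <;> simp [hk, Finset.sum_ite_eq']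
        have hinn : ∀ k, (∑ i, d i k)
            = (if k = m then t else 0) + (if k = l then t else 0) := by
          intro k
          simp only [hddef]
          rw [Finset.sum_add_distrib]
          congr 1
          · by_cases hk : k = m <;> simp [hk, Finset.sum_ite_eq']
          · by_cases hk : k = l <;> simp [hk, Finset.sum_ite_eq']
        have hdsum : (∑ i, ∑ j, d i j) = 2 * t := by
          rw [Finset.sum_congr rfl (fun i _ => hout i)]
          rw [Finset.sum_add_distrib]
          simp [Finset.sum_ite_eq']
          ring
        have hf' : ∀ k, fb (fun i j => x i j - d i j) k
            = fb x k - (if k = p then t else 0) + (if k = l then t else 0) := by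
          intro k; rw [fb_sub, hout, hinn]; ring
        have htc : t = x p m ∨ t = x m l ∨ t = fb x p ∨ t = -fb x l := by
          rcases min_choice (min (x p m) (x m l)) (min (fb x p) (-fb x l)) with h | h
          · rcases min_choice (x p m) (x m l) with h2 | h2
            · left; rw [htdef, h, h2]
            · right; left; rw [htdef, h, h2]
          · rcases min_choice (fb x p) (-fb x l) with h2 | h2
            · right; right; left; rw [htdef, h, h2]
            · right; right; right; rw [htdef, h, h2]
        have hstrict : (∃ k, fb x k ≠ 0 ∧ fb (fun i j => x i j - d i j) k = 0) ∨
            (∃ a b, a ≠ b ∧ x a b ≠ 0 ∧ x a b - d a b = 0) := by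
          rcases htc with h | h | h | h
          · right; refine ⟨p, m, Ne.symm hm.1, hxpm.ne', ?_⟩
            have hd : d p m = t := by simp [hddef, (Ne.symm hm.1 : p ≠ m)]
            rw [hd, h, sub_self]
          · right; refine ⟨m, l, hm.2, hxml.ne', ?_⟩
            have hd : d m l = t := by simp [hddef, hm.1]
            rw [hd, h, sub_self]
          · left; refine ⟨p, hfp.ne', ?_⟩
            rw [hf' p, if_pos rfl, if_neg hpl, h]; ring
          · left; refine ⟨l, hfl.ne, ?_⟩
            rw [hf' l, if_neg (Ne.symm hpl), if_pos rfl, h]; ring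
        have hMlt := Mx_lt x d hd0 hdx p l hfp.ne' hfl.ne
          (fun k hkp hkl => by rw [hf' k, if_neg hkp, if_neg hkl]; ring) hstrict
        obtain ⟨y, hy0, hyx, hybal, hydec⟩ := ih (fun i j => x i j - d i j) (by omega)
          (fun i j => sub_nonneg.mpr (hdx i j))
        refine ⟨y, hy0, fun i j => (hyx i j).trans (by linarith [hd0 i j]), hybal, ?_⟩
        have habs : ∑ k, |fb (fun i j => x i j - d i j) k| = (∑ k, |fb x k|) - 2 * t := by
          rw [Finset.sum_congr rfl (fun k _ => by rw [hf' k])]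
          exact abs_sum_step (fb x) p l hpl t ht0 htp htl
        have hsx : (∑ i, ∑ j, (x i j - d i j)) = (∑ i, ∑ j, x i j) - 2 * t := by
          simp only [Finset.sum_sub_distrib]
          rw [hdsum]
        rw [hsx, habs] at hydec
        linarith

lemma balance (x : Fin 3 → Fin 3 → ℝ) (hx : ∀ i j, 0 ≤ x i j) :
    ∃ y : Fin 3 → Fin 3 → ℝ, (∀ i j, 0 ≤ y i j) ∧ (∀ i j, y i j ≤ x i j) ∧
      (∀ k, fb y k = 0) ∧
      (∑ i, ∑ j, x i j) - (∑ i, ∑ j, y i j) ≤ ∑ k, |fb x k| :=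
  balance_aux (Mx x) x le_rfl hx


end Stmt15Aux

open Stmt15Aux in
/-- Continuity of the relaxed LP value at `ε = 0`, with the quantitative bound
`C(0) ≤ C(ε) ≤ C(0) + 4·max_{σᵢⱼ≠0}(σᵢⱼ⁻²)·ε·∑σᵢⱼ²`. Here `s i j` denotes `σᵢⱼ²`. -/
theorem stmt15 (s : Fin 3 → Fin 3 → ℝ) (hs : ∀ i j, 0 ≤ s i j)
    (C : ℝ → ℝ)
    (hC : ∀ ε : ℝ, C ε = sSup {r : ℝ | ∃ δ : Fin 3 → Fin 3 → ℝ,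
        (∀ i j, 0 ≤ δ i j) ∧ (∑ i, ∑ j, δ i j) ≤ 1 ∧
        (∑ k, |(∑ j, δ k j * s k j) - (∑ i, δ i k * s i k)|) ≤ ε ∧
        r = ∑ i, ∑ j, δ i j * s i j})
    (K : ℝ) (hK : K = sSup {r : ℝ | ∃ i j, s i j ≠ 0 ∧ r = (s i j)⁻¹}) :
    Tendsto C (𝓝[>] (0 : ℝ)) (𝓝 (C 0)) ∧
    ∀ ε : ℝ, 0 < ε →
      C 0 ≤ C ε ∧ C ε ≤ C 0 + 4 * K * ε * (∑ i, ∑ j, s i j) := by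
  set S : ℝ → Set ℝ := fun ε => {r : ℝ | ∃ δ : Fin 3 → Fin 3 → ℝ,
      (∀ i j, 0 ≤ δ i j) ∧ (∑ i, ∑ j, δ i j) ≤ 1 ∧
      (∑ k, |(∑ j, δ k j * s k j) - (∑ i, δ i k * s i k)|) ≤ ε ∧
      r = ∑ i, ∑ j, δ i j * s i j} with hS
  set T : ℝ := ∑ i, ∑ j, s i j with hT
  have hT0 : 0 ≤ T := by
    rw [hT]; exact Finset.sum_nonneg fun i _ => Finset.sum_nonneg fun j _ => hs i j
  -- 0 is in every S ε for ε ≥ 0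
  have h0mem : ∀ ε : ℝ, 0 ≤ ε → (0:ℝ) ∈ S ε := by
    intro ε hε
    refine ⟨fun _ _ => 0, fun _ _ => le_rfl, by norm_num, by simpa using hε, by norm_num⟩
  -- bounded above by T
  have hbdd : ∀ ε : ℝ, T ∈ upperBounds (S ε) := by
    intro ε r hr
    obtain ⟨δ, hδ0, hδ1, -, rfl⟩ := hr
    rw [hT]
    refine Finset.sum_le_sum fun i _ => Finset.sum_le_sum fun j _ => ?_
    have h1 : δ i j ≤ 1 := by
      refine le_trans ?_ hδ1
      calc δ i j ≤ ∑ j', δ i j' :=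
            Finset.single_le_sum (fun j' _ => hδ0 i j') (Finset.mem_univ j)
        _ ≤ ∑ i', ∑ j', δ i' j' :=
            Finset.single_le_sum (fun i' _ => Finset.sum_nonneg fun j' _ => hδ0 i' j')
              (Finset.mem_univ i)
    exact mul_le_of_le_one_left (hs i j) h1
  have hbdd' : ∀ ε : ℝ, BddAbove (S ε) := fun ε => ⟨T, hbdd ε⟩
  -- monotonicity : C 0 ≤ C ε
  have hmono : ∀ ε : ℝ, 0 < ε → C 0 ≤ C ε := by
    intro ε hε
    rw [hC 0, hC ε]
    apply csSup_le_csSup (hbdd' ε) ⟨0, h0mem 0 le_rfl⟩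
    rintro r ⟨δ, h1, h2, h3, h4⟩
    exact ⟨δ, h1, h2, h3.trans hε.le, h4⟩
  -- key upper bound : C ε ≤ C 0 + ε
  have hupper : ∀ ε : ℝ, 0 < ε → C ε ≤ C 0 + ε := by
    intro ε hε
    rw [hC ε]
    apply csSup_le ⟨0, h0mem ε hε.le⟩
    rintro r ⟨δ, hδ0, hδ1, hδbal, rfl⟩
    have hx0 : ∀ i j, 0 ≤ δ i j * s i j := fun i j => mul_nonneg (hδ0 i j) (hs i j)
    obtain ⟨y, hy0, hyx, hybal, hydec⟩ := balance (fun i j => δ i j * s i j) hx0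
    set δ' : Fin 3 → Fin 3 → ℝ := fun i j => if s i j = 0 then 0 else y i j / s i j with hδ'
    have hys : ∀ i j, δ' i j * s i j = y i j := by
      intro i j
      simp only [hδ']
      split_ifs with h
      · have hy00 : y i j = 0 := le_antisymm (by simpa [h] using hyx i j) (hy0 i j)
        simp [h, hy00]
      · exact div_mul_cancel₀ _ h
    have hδ'0 : ∀ i j, 0 ≤ δ' i j := by
      intro i j
      simp only [hδ']
      split_ifs with h
      · exact le_rfl
      · exact div_nonneg (hy0 i j) (hs i j)
    have hδ'le : ∀ i j, δ' i j ≤ δ i j := by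
      intro i j
      simp only [hδ']
      split_ifs with h
      · exact hδ0 i j
      · have hsij : 0 < s i j := (hs i j).lt_of_ne (Ne.symm h)
        rw [div_le_iff₀ hsij]
        exact hyx i j
    have hmem : (∑ i, ∑ j, y i j) ∈ S 0 := by
      refine ⟨δ', hδ'0, ?_, ?_, ?_⟩
      · exact le_trans (Finset.sum_le_sum fun i _ =>
          Finset.sum_le_sum fun j _ => hδ'le i j) hδ1
      · have : ∀ k : Fin 3, |(∑ j, δ' k j * s k j) - (∑ i, δ' i k * s i k)| = 0 := by
          intro k
          simp only [hys]
          rw [abs_eq_zero]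
          exact hybal k
        rw [Finset.sum_congr rfl fun k _ => this k]
        simp
      · exact (Finset.sum_congr rfl fun i _ =>
          Finset.sum_congr rfl fun j _ => (hys i j).symm)
    have hyC : (∑ i, ∑ j, y i j) ≤ C 0 := by
      rw [hC 0]; exact le_csSup (hbdd' 0) hmem
    have hfb : (∑ k, |fb (fun i j => δ i j * s i j) k|) ≤ ε := hδbal
    linarith [hydec]
  -- bound with K
  have hbound : ∀ ε : ℝ, 0 < ε → C ε ≤ C 0 + 4 * K * ε * T := by
    intro ε hε
    by_cases hallz : ∀ i j, s i j = 0
    · have hTz : T = 0 := by simp [hT, hallz]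
      have hC0 : (0:ℝ) ≤ C 0 := by
        rw [hC 0]; exact le_csSup (hbdd' 0) (h0mem 0 le_rfl)
      have : C ε ≤ C 0 := by
        rw [hC ε]
        apply csSup_le ⟨0, h0mem ε hε.le⟩
        rintro r ⟨δ, -, -, -, rfl⟩
        have : (∑ i, ∑ j, δ i j * s i j) = 0 := by simp [hallz]
        rw [this]; exact hC0
      rw [hTz]; linarith
    · push_neg at hallz
      obtain ⟨i, j, hij⟩ := hallz
      have hsij : 0 < s i j := (hs i j).lt_of_ne (Ne.symm hij)
      have hfin : {r : ℝ | ∃ i j, s i j ≠ 0 ∧ r = (s i j)⁻¹}.Finite := by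
        apply Set.Finite.subset (Set.finite_range fun e : Fin 3 × Fin 3 => (s e.1 e.2)⁻¹)
        rintro r ⟨a, b, -, rfl⟩
        exact ⟨(a, b), rfl⟩
      have hKge : (s i j)⁻¹ ≤ K := by
        rw [hK]
        exact le_csSup hfin.bddAbove ⟨i, j, hij, rfl⟩
      have hK0 : 0 ≤ K := le_trans (inv_pos.mpr hsij).le hKge
      have hsT : s i j ≤ T := by
        rw [hT]
        calc s i j ≤ ∑ j', s i j' :=
              Finset.single_le_sum (fun j' _ => hs i j') (Finset.mem_univ j)
          _ ≤ ∑ i', ∑ j', s i' j' :=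
              Finset.single_le_sum (fun i' _ => Finset.sum_nonneg fun j' _ => hs i' j')
                (Finset.mem_univ i)
      have h1 : 1 ≤ K * T := by
        have h2 : (s i j)⁻¹ * s i j ≤ K * T := mul_le_mul hKge hsT (hs i j) hK0
        rwa [inv_mul_cancel₀ hsij.ne'] at h2
      have h3 : ε * 1 ≤ ε * (K * T) := mul_le_mul_of_nonneg_left h1 hε.le
      have h4 := hupper ε hε
      nlinarith
  refine ⟨?_, fun ε hε => ⟨hmono ε hε, hbound ε hε⟩⟩
  have hcont : Tendsto (fun ε : ℝ => C 0 + 4 * K * ε * T) (𝓝[>] (0:ℝ)) (𝓝 (C 0)) := by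
    have h1 : Continuous fun ε : ℝ => C 0 + 4 * K * ε * T := by fun_prop
    have h2 : Tendsto (fun ε : ℝ => C 0 + 4 * K * ε * T) (𝓝[>] (0:ℝ))
        (𝓝 (C 0 + 4 * K * 0 * T)) := (h1.tendsto 0).mono_left nhdsWithin_le_nhds
    simpa using h2
  refine tendsto_of_tendsto_of_tendsto_of_le_of_le' tendsto_const_nhds hcont ?_ ?_
  · exact eventually_of_mem self_mem_nhdsWithin fun ε hε => hmono ε hε
  · exact eventually_of_mem self_mem_nhdsWithin fun ε hε => hbound ε hε
end

section
/- Consider the LP: maximize ∑_{i,j∈{0,1,2}} δ_{ij}σ_{ij}² over δ_{ij} ≥ 0 with ∑_{i,j}δ_{ij} ≤ 1 and the flow balance constraints ∑_{i}δ_{ik}σ_{ik}² = ∑_{j}δ_{kj}σ_{kj}² for k = 0,1,2 (all σ_{ij}² > 0). Its optimal value equals max{σ₁₁², σ₀₀², σ₂₂², M(σ₁₀²,σ₀₁²), M(σ₂₀²,σ₀₂²), M(σ₁₂²,σ₂₁²), M(σ₁₀²,σ₀₂²,σ₂₁²), M(σ₂₀²,σ₀₁²,σ₁₂²)}, where M denotes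 the harmonic mean. -/
/-!
Each cyclic mode `i ↦ σ i` on a node set `C` is feasible: putting mass `1 / (H s_{i,σ i})` on its
edges, with `H = ∑_{i ∈ C} s_{i,σ i}⁻¹`, gives every edge the same flow `1 / H`, total mass `1`
and value `|C| / H`, the harmonic mean. Conversely, let `V` be the largest of these means. The
reduced costs `c_ij = V / s_ij - 1` have nonnegative sum around every cycle (this is exactly
`M ≤ V`), so there are potentials `y` with `y_i - y_j ≤ c_ij`, i.e. `s_ij (1 + y_i - y_j) ≤ V`.
Flow balance makes `∑ δ_ij s_ij (y_i - y_j)` vanish, hence the objective equals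
`∑ δ_ij s_ij (1 + y_i - y_j) ≤ V ∑ δ_ij ≤ V`.
-/

open Finset

variable {ι : Type*} [Fintype ι]

def balancedFlowValues (s : ι → ι → ℝ) : Set ℝ :=
  {r : ℝ | ∃ δ : ι → ι → ℝ,
    (∀ i j, 0 ≤ δ i j) ∧ (∑ i, ∑ j, δ i j) ≤ 1 ∧
    (∀ k, ∑ i, δ i k * s i k = ∑ j, δ k j * s k j) ∧
    r = ∑ i, ∑ j, δ i j * s i j}

theorem sum_sum_mul_sub_eq_zero_of_balanced (w : ι → ι → ℝ)
    (hw : ∀ k, ∑ i, w i k = ∑ j, w k j) (y : ι → ℝ) :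
    ∑ i, ∑ j, w i j * (y i - y j) = 0 := by
  have hin : ∑ i, ∑ j, w i j * y j = ∑ k, y k * ∑ i, w i k := by
    rw [Finset.sum_comm]; simp only [Finset.mul_sum, mul_comm]
  have hout : ∑ i, ∑ j, w i j * y i = ∑ k, y k * ∑ j, w k j := by
    simp only [Finset.mul_sum, mul_comm]
  simp only [mul_sub, Finset.sum_sub_distrib, hin, hout, hw, sub_self]

theorem le_of_mem_balancedFlowValues_of_potential {s : ι → ι → ℝ} {r V : ℝ}
    (hr : r ∈ balancedFlowValues s) (hV : 0 ≤ V) (y : ι → ℝ)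
    (hy : ∀ i j, s i j * (1 + (y i - y j)) ≤ V) : r ≤ V := by
  obtain ⟨δ, hδ, hmass, hbal, rfl⟩ := hr
  have hzero := sum_sum_mul_sub_eq_zero_of_balanced (fun i j => δ i j * s i j) hbal y
  calc ∑ i, ∑ j, δ i j * s i j
      = ∑ i, ∑ j, δ i j * (s i j * (1 + (y i - y j)))
          - ∑ i, ∑ j, δ i j * s i j * (y i - y j) := by
        simp only [← Finset.sum_sub_distrib]; ring_nf
    _ ≤ ∑ i, ∑ j, δ i j * V := by
        rw [hzero, sub_zero]; gcongr with i _ j _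
        exacts [hδ i j, hy i j]
    _ = V * ∑ i, ∑ j, δ i j := by simp only [Finset.mul_sum, mul_comm]
    _ ≤ V := mul_le_of_le_one_right hV hmass

theorem cycle_mem_balancedFlowValues [DecidableEq ι] (s : ι → ι → ℝ) (σ : Equiv.Perm ι)
    (C : Finset ι) (hC : C.Nonempty) (hσC : ∀ i, σ i ∈ C ↔ i ∈ C) (hs : ∀ i ∈ C, 0 < s i (σ i)) :
    (#C : ℝ) / ∑ i ∈ C, (s i (σ i))⁻¹ ∈ balancedFlowValues s := by
  set H := ∑ i ∈ C, (s i (σ i))⁻¹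
  have hH : 0 < H := Finset.sum_pos (fun i hi => inv_pos.2 (hs i hi)) hC
  set δ : ι → ι → ℝ := fun i j => if i ∈ C then if σ i = j then (H * s i j)⁻¹ else 0 else 0
  have flow : ∀ i j, δ i j * s i j = if i ∈ C then if σ i = j then H⁻¹ else 0 else 0 := by
    intro i j
    simp only [δ]
    split_ifs with hi hj
    · have := (hs i hi).ne'; subst hj; field_simp
    all_goals simp
  have row : ∀ i, ∑ j, δ i j * s i j = if i ∈ C then H⁻¹ else 0 := by
    intro i; simp [flow]
  have col : ∀ k, ∑ i, δ i k * s i k = if k ∈ C then H⁻¹ else 0 := by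
    intro k; simp [flow, ← Equiv.eq_symm_apply, ← hσC (σ.symm k)]
  refine ⟨δ, fun i j => ?_, ?_, fun k => ?_, ?_⟩
  · simp only [δ]
    split_ifs with hi hj
    · exact inv_nonneg.2 (mul_nonneg hH.le (hj ▸ (hs i hi).le))
    all_goals exact le_rfl
  · simp [δ, ← Finset.sum_mul, H, mul_inv_cancel₀ hH.ne']
  · rw [row, col]
  · simp [row, div_eq_mul_inv]

theorem diag_mem_balancedFlowValues [DecidableEq ι] (s : ι → ι → ℝ) (i : ι) (hs : 0 < s i i) :
    s i i ∈ balancedFlowValues s := by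
  simpa using
    cycle_mem_balancedFlowValues s 1 {i} (singleton_nonempty i) (by simp) (by simpa using hs)

theorem two_div_inv_add_inv_mem_balancedFlowValues [DecidableEq ι] (s : ι → ι → ℝ) {i j : ι}
    (hij : i ≠ j) (hsij : 0 < s i j) (hsji : 0 < s j i) :
    2 / ((s i j)⁻¹ + (s j i)⁻¹) ∈ balancedFlowValues s := by
  have := cycle_mem_balancedFlowValues s (Equiv.swap i j) {i, j} (insert_nonempty i {j})
    (fun k => by rw [Equiv.swap_apply_def]; split_ifs <;> simp_all)
    (by simp [hsij, hsji])
  simpa [card_pair hij, sum_pair hij] using this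

theorem two_mul_mul_div_add_eq_two_div_inv_add_inv {a b : ℝ} (ha : 0 < a) (hb : 0 < b) :
    2 * a * b / (a + b) = 2 / (a⁻¹ + b⁻¹) := by
  field_simp
  ring

theorem three_cycles_mem_balancedFlowValues_fin_three {s : Fin 3 → Fin 3 → ℝ}
    (hs : ∀ i j, 0 < s i j) :
    3 / ((s 2 0)⁻¹ + (s 0 1)⁻¹ + (s 1 2)⁻¹) ∈ balancedFlowValues s ∧
      3 / ((s 1 0)⁻¹ + (s 0 2)⁻¹ + (s 2 1)⁻¹) ∈ balancedFlowValues s := by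
  have h :=
    cycle_mem_balancedFlowValues s (finRotate 3) univ univ_nonempty (by simp) (by simp [hs])
  have h' :=
    cycle_mem_balancedFlowValues s (finRotate 3).symm univ univ_nonempty (by simp) (by simp [hs])
  have hneg : (-1 : Fin 3) = 2 := rfl
  simp only [card_univ, Fintype.card_fin, Nat.cast_ofNat, finRotate_apply, Fin.isValue,
    Fin.sum_univ_three, zero_add, Fin.reduceAdd, finRotate_symm_apply, zero_sub, hneg, sub_self,
    Fin.reduceSub] at h h'
  constructor
  · convert h using 2; ring
  · convert h' using 2; ring

theorem exists_potential_fin_three (c : Fin 3 → Fin 3 → ℝ)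
    (h01 : 0 ≤ c 0 1 + c 1 0) (h02 : 0 ≤ c 0 2 + c 2 0) (h12 : 0 ≤ c 1 2 + c 2 1)
    (h021 : 0 ≤ c 1 0 + c 0 2 + c 2 1) (h012 : 0 ≤ c 2 0 + c 0 1 + c 1 2) :
    ∃ y : Fin 3 → ℝ, ∀ i j, i ≠ j → y i - y j ≤ c i j := by
  -- `y i` is the length of a shortest `c`-path from `i` to `0`.
  set y₁ := min (c 1 0) (c 1 2 + c 2 0)
  set y₂ := min (c 2 0) (c 2 1 + c 1 0)
  have e10 : y₁ ≤ c 1 0 := min_le_left _ _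
  have e20 : y₂ ≤ c 2 0 := min_le_left _ _
  have e01 : -c 0 1 ≤ y₁ := le_min (by linarith) (by linarith)
  have e02 : -c 0 2 ≤ y₂ := le_min (by linarith) (by linarith)
  have e12 : y₁ - c 1 2 ≤ y₂ :=
    le_min (by linarith [min_le_right (c 1 0) (c 1 2 + c 2 0)]) (by linarith)
  have e21 : y₂ - c 2 1 ≤ y₁ :=
    le_min (by linarith [min_le_right (c 2 0) (c 2 1 + c 1 0)]) (by linarith)
  refine ⟨![0, y₁, y₂], fun i j hij => ?_⟩
  fin_cases i <;> fin_cases j <;>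
    simp only [Fin.zero_eta, Fin.isValue, Fin.mk_one, Fin.reduceFinMk, ne_eq, not_true_eq_false,
      Matrix.cons_val_zero, Matrix.cons_val_one, Matrix.cons_val, zero_sub, sub_zero] at hij ⊢ <;>
    linarith

theorem mem_upperBounds_balancedFlowValues_fin_three {s : Fin 3 → Fin 3 → ℝ}
    (hs : ∀ i j, 0 < s i j) {V : ℝ} (hdiag : ∀ i, s i i ≤ V)
    (h01 : 2 / ((s 1 0)⁻¹ + (s 0 1)⁻¹) ≤ V) (h02 : 2 / ((s 2 0)⁻¹ + (s 0 2)⁻¹) ≤ V)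
    (h12 : 2 / ((s 1 2)⁻¹ + (s 2 1)⁻¹) ≤ V)
    (h021 : 3 / ((s 1 0)⁻¹ + (s 0 2)⁻¹ + (s 2 1)⁻¹) ≤ V)
    (h012 : 3 / ((s 2 0)⁻¹ + (s 0 1)⁻¹ + (s 1 2)⁻¹) ≤ V) :
    V ∈ upperBounds (balancedFlowValues s) := by
  have inv := fun i j => inv_pos.2 (hs i j)
  obtain ⟨y, hy⟩ := exists_potential_fin_three (fun i j => V * (s i j)⁻¹ - 1)
    (by linear_combination (div_le_iff₀ (by linarith [inv 1 0, inv 0 1])).1 h01)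
    (by linear_combination (div_le_iff₀ (by linarith [inv 2 0, inv 0 2])).1 h02)
    (by linear_combination (div_le_iff₀ (by linarith [inv 1 2, inv 2 1])).1 h12)
    (by linear_combination (div_le_iff₀ (by linarith [inv 1 0, inv 0 2, inv 2 1])).1 h021)
    (by linear_combination (div_le_iff₀ (by linarith [inv 2 0, inv 0 1, inv 1 2])).1 h012)
  intro r hr
  refine le_of_mem_balancedFlowValues_of_potential hr ((hs 0 0).le.trans (hdiag 0)) y
    fun i j => ?_
  rcases eq_or_ne i j with rfl | hij
  · simpa using hdiag i
  · have := (hs i j).ne'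
    calc s i j * (1 + (y i - y j)) ≤ s i j * (V * (s i j)⁻¹) :=
          mul_le_mul_of_nonneg_left (by linarith [hy i j hij]) (hs i j).le
      _ = V := by field_simp

/-- Identical-layers LP (Theorem 2): with flow balance, the optimal value is the maximum over
the eight cyclic communication modes, each valued by the harmonic mean of its link
parameters. Here `s i j` denotes `σᵢⱼ²`, `M2`/`M3` are harmonic means of two/three numbers. -/
theorem stmt16 (s : Fin 3 → Fin 3 → ℝ) (hs : ∀ i j, 0 < s i j)
    (M2 : ℝ → ℝ → ℝ) (hM2 : ∀ a b, M2 a b = 2 * a * b / (a + b))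
    (M3 : ℝ → ℝ → ℝ → ℝ) (hM3 : ∀ a b c, M3 a b c = 3 / (a⁻¹ + b⁻¹ + c⁻¹)) :
    IsGreatest {r : ℝ | ∃ δ : Fin 3 → Fin 3 → ℝ,
        (∀ i j, 0 ≤ δ i j) ∧ (∑ i, ∑ j, δ i j) ≤ 1 ∧
        (∀ k, ∑ i, δ i k * s i k = ∑ j, δ k j * s k j) ∧
        r = ∑ i, ∑ j, δ i j * s i j}
      (max (max (max (s 1 1) (max (s 0 0) (s 2 2)))
            (max (M2 (s 1 0) (s 0 1)) (max (M2 (s 2 0) (s 0 2)) (M2 (s 1 2) (s 2 1)))))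
        (max (M3 (s 1 0) (s 0 2) (s 2 1)) (M3 (s 2 0) (s 0 1) (s 1 2)))) := by
  have hM2' : ∀ i j, M2 (s i j) (s j i) = 2 / ((s i j)⁻¹ + (s j i)⁻¹) := fun i j => by
    rw [hM2, two_mul_mul_div_add_eq_two_div_inv_add_inv (hs i j) (hs j i)]
  simp only [hM2', hM3]
  change IsGreatest (balancedFlowValues s) _
  have diag i := diag_mem_balancedFlowValues s i (hs i i)
  have pair (i j : Fin 3) (hij : i ≠ j) :=
    two_div_inv_add_inv_mem_balancedFlowValues s hij (hs i j) (hs j i)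
  obtain ⟨rot, rot'⟩ := three_cycles_mem_balancedFlowValues_fin_three hs
  refine ⟨?_, mem_upperBounds_balancedFlowValues_fin_three hs (fun i => ?_) ?_ ?_ ?_ ?_ ?_⟩
  · exact max_rec' _
      (max_rec' _ (max_rec' _ (diag 1) (max_rec' _ (diag 0) (diag 2)))
        (max_rec' _ (pair 1 0 (by decide))
          (max_rec' _ (pair 2 0 (by decide)) (pair 1 2 (by decide)))))
      (max_rec' _ rot' rot)
  · fin_cases i <;> simp
  all_goals simp
end
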